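/- arXiv:1407.5226 — 2 statements merged into one kernel-verified Lean document; each statement's English description precedes it below -/
import Mathlib

section
/- (Lemma 5.1) Let n ≥ 1 and let G be a real symmetric Lorentzian (n+1)×(n+1) matrix with G₀₀ > 0. If ξ′ = (ξ′₁,…,ξ′ₙ) ∈ ℝⁿ is nonzero and Σ_{j,k=1}^n G_{jk} ξ′_j ξ′_k = 0, then Σ_{j=1}^n G_{0j} ξ′_j ≠ 0. -/
open Matrix

/-- The `(n+1) × (n+1)` diagonal Lorentz matrix `η` with `η₀₀ = 1` and `η_jj = -1` for
`j = 1, …, n`. -/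
def lorentzEta (n : ℕ) : Matrix (Fin (n + 1)) (Fin (n + 1)) ℝ :=
  Matrix.diagonal (fun j => if j = 0 then (1 : ℝ) else -1)

/-- A real symmetric `(n+1) × (n+1)` matrix `G` is Lorentzian if `Pᵀ G P = η` for some
invertible real matrix `P`. -/
def IsLorentzian {n : ℕ} (G : Matrix (Fin (n + 1)) (Fin (n + 1)) ℝ) : Prop :=
  G.IsSymm ∧ ∃ P : Matrix (Fin (n + 1)) (Fin (n + 1)) ℝ, IsUnit P.det ∧ Pᵀ * G * P = lorentzEta n

/-- Helper: splitting the Lorentz quadratic/bilinear sum into time and space parts. -/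
lemma lorentz_sum_split (n : ℕ) (x y : Fin (n + 1) → ℝ) :
    ∑ i, (if i = 0 then (1:ℝ) else -1) * x i * y i
      = x 0 * y 0 - ∑ j : Fin n, x j.succ * y j.succ := by
  rw [Fin.sum_univ_succ]
  simp [Fin.succ_ne_zero, Finset.sum_neg_distrib, sub_eq_add_neg]

/-- Lemma 5.1 of the paper: if `G` is Lorentzian with `G₀₀ > 0`, `ξ' ≠ 0` and the
spatial form vanishes at `ξ'` (i.e. the surface with conormal `ξ'` is characteristic),
then `Σ_{j=1}^n G_{0j} ξ'_j ≠ 0`. -/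
theorem lemma_5_1 (n : ℕ) (hn : 1 ≤ n)
    (G : Matrix (Fin (n + 1)) (Fin (n + 1)) ℝ) (hG : IsLorentzian G)
    (hG00 : 0 < G 0 0) (ξ' : Fin n → ℝ) (hξ' : ξ' ≠ 0)
    (hchar : ∑ j, ∑ k, G j.succ k.succ * ξ' j * ξ' k = 0) :
    ∑ j, G 0 j.succ * ξ' j ≠ 0 := by
  intro hcontra
  obtain ⟨hsymm, P, hPdet, hPη⟩ := hG
  -- the bilinear form of G pulled back along P is the Lorentz form
  have key : ∀ u v : Fin (n+1) → ℝ,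
      (P *ᵥ u) ⬝ᵥ (G *ᵥ (P *ᵥ v)) = ∑ i, (if i = 0 then (1:ℝ) else -1) * u i * v i := by
    intro u v
    have h1 : (P *ᵥ u) ⬝ᵥ (G *ᵥ (P *ᵥ v)) = u ⬝ᵥ ((Pᵀ * G * P) *ᵥ v) := by
      rw [← mulVec_mulVec, ← mulVec_mulVec, dotProduct_mulVec u, vecMul_transpose]
    rw [h1, hPη]
    simp [lorentzEta, mulVec_diagonal, dotProduct, mul_comm, mul_assoc, mul_left_comm]
  -- the vectors e₀ and (0, ξ')
  set e : Fin (n+1) → ℝ := Pi.single 0 1 with he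
  set ξv : Fin (n+1) → ℝ := Fin.cons 0 ξ' with hξv
  -- preimages under P
  haveI : Invertible P := P.invertibleOfIsUnitDet hPdet
  set u : Fin (n+1) → ℝ := P⁻¹ *ᵥ e with hu
  set v : Fin (n+1) → ℝ := P⁻¹ *ᵥ ξv with hv
  have hPu : P *ᵥ u = e := by
    rw [hu, mulVec_mulVec, Matrix.mul_nonsing_inv P hPdet, one_mulVec]
  have hPv : P *ᵥ v = ξv := by
    rw [hv, mulVec_mulVec, Matrix.mul_nonsing_inv P hPdet, one_mulVec]
  -- the three values of the bilinear form of G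
  have hee : e ⬝ᵥ (G *ᵥ e) = G 0 0 := by
    simp [he, dotProduct, mulVec, Pi.single_apply]
  have heξ : e ⬝ᵥ (G *ᵥ ξv) = 0 := by
    have : e ⬝ᵥ (G *ᵥ ξv) = ∑ k, G 0 k * ξv k := by
      simp [he, dotProduct, mulVec, Pi.single_apply]
    rw [this, Fin.sum_univ_succ]
    simpa [hξv] using hcontra
  have hξe : ξv ⬝ᵥ (G *ᵥ e) = 0 := by
    have h1 : ξv ⬝ᵥ (G *ᵥ e) = ∑ i, ξv i * G i 0 := by
      simp [he, dotProduct, mulVec, Pi.single_apply]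
    rw [h1, Fin.sum_univ_succ]
    have h2 : ∀ j : Fin n, G j.succ 0 = G 0 j.succ := fun j => (hsymm.apply 0 j.succ)
    simp only [hξv, Fin.cons_zero, Fin.cons_succ, zero_mul, zero_add]
    rw [show (∑ j : Fin n, ξ' j * G j.succ 0) = ∑ j : Fin n, G 0 j.succ * ξ' j from
      Finset.sum_congr rfl fun j _ => by rw [h2 j]; ring]
    exact hcontra
  have hξξ : ξv ⬝ᵥ (G *ᵥ ξv) = 0 := by
    have h1 : ξv ⬝ᵥ (G *ᵥ ξv) = ∑ i, ξv i * ∑ k, G i k * ξv k := by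
      simp [dotProduct, mulVec]
    rw [h1, Fin.sum_univ_succ]
    simp only [hξv, Fin.cons_zero, Fin.cons_succ, zero_mul, zero_add]
    calc ∑ j : Fin n, ξ' j * ∑ k, G j.succ k * ξv k
        = ∑ j : Fin n, ∑ k : Fin n, G j.succ k.succ * ξ' j * ξ' k := by
          refine Finset.sum_congr rfl fun j _ => ?_
          rw [Fin.sum_univ_succ]
          simp only [hξv, Fin.cons_zero, Fin.cons_succ, mul_zero, zero_add]
          rw [Finset.mul_sum]
          exact Finset.sum_congr rfl fun k _ => by ring
      _ = 0 := hchar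
  -- translate to the Lorentz form values of u and v
  have Suu : ∑ i, (if i = 0 then (1:ℝ) else -1) * u i * u i = G 0 0 := by
    rw [← key u u, hPu, hee]
  have Suv : ∑ i, (if i = 0 then (1:ℝ) else -1) * u i * v i = 0 := by
    rw [← key u v, hPu, hPv, heξ]
  have Svu : ∑ i, (if i = 0 then (1:ℝ) else -1) * v i * u i = 0 := by
    rw [← key v u, hPu, hPv, hξe]
  have Svv : ∑ i, (if i = 0 then (1:ℝ) else -1) * v i * v i = 0 := by
    rw [← key v v, hPv, hξξ]
  rw [lorentz_sum_split] at Suu Suv Svu Svv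
  -- the combination w = v₀ u - u₀ v
  set w : Fin (n+1) → ℝ := fun i => v 0 * u i - u 0 * v i with hw
  have hw0 : w 0 = 0 := by simp [hw]; ring
  have hSww : w 0 * w 0 - ∑ j : Fin n, w j.succ * w j.succ = (v 0)^2 * G 0 0 := by
    have expand : ∀ j : Fin n, w j.succ * w j.succ
        = (v 0)^2 * (u j.succ * u j.succ) - (v 0 * u 0) * (u j.succ * v j.succ)
          - (u 0 * v 0) * (v j.succ * u j.succ) + (u 0)^2 * (v j.succ * v j.succ) := by
      intro j; simp only [hw]; ring
    rw [Finset.sum_congr rfl fun j _ => expand j]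
    rw [Finset.sum_add_distrib, Finset.sum_sub_distrib, Finset.sum_sub_distrib,
      ← Finset.mul_sum, ← Finset.mul_sum, ← Finset.mul_sum, ← Finset.mul_sum]
    have e1 : ∑ j : Fin n, u j.succ * u j.succ = u 0 * u 0 - G 0 0 := by linarith [Suu]
    have e2 : ∑ j : Fin n, u j.succ * v j.succ = u 0 * v 0 := by linarith [Suv]
    have e3 : ∑ j : Fin n, v j.succ * u j.succ = v 0 * u 0 := by linarith [Svu]
    have e4 : ∑ j : Fin n, v j.succ * v j.succ = v 0 * v 0 := by linarith [Svv]
    rw [e1, e2, e3, e4, hw0]; ring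
  rw [hw0] at hSww
  -- the space part of w is a sum of squares
  have hsq : ∀ j : Fin n, 0 ≤ w j.succ * w j.succ := fun j => mul_self_nonneg _
  have hsum_nonneg : 0 ≤ ∑ j : Fin n, w j.succ * w j.succ :=
    Finset.sum_nonneg fun j _ => hsq j
  have hv0sq : 0 ≤ (v 0)^2 * G 0 0 := mul_nonneg (sq_nonneg _) hG00.le
  have hsum_zero : ∑ j : Fin n, w j.succ * w j.succ = 0 := by nlinarith
  have hv0 : v 0 = 0 := by
    have : (v 0)^2 * G 0 0 = 0 := by linarith
    have := (mul_eq_zero.mp this).resolve_right (ne_of_gt hG00)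
    exact pow_eq_zero_iff two_ne_zero |>.mp this
  have hwj : ∀ j : Fin n, w j.succ = 0 := by
    intro j
    have := (Finset.sum_eq_zero_iff_of_nonneg (fun j _ => hsq j)).mp hsum_zero j
      (Finset.mem_univ j)
    exact mul_self_eq_zero.mp this
  -- u₀ ≠ 0 since the Lorentz form is positive at u
  have hu0 : u 0 ≠ 0 := by
    intro h
    rw [h] at Suu
    have hpos : (0:ℝ) ≤ ∑ j : Fin n, u j.succ * u j.succ :=
      Finset.sum_nonneg fun j _ => mul_self_nonneg _
    nlinarith
  -- hence v = 0
  have hvzero : v = 0 := by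
    funext i
    refine Fin.cases ?_ ?_ i
    · exact hv0
    · intro j
      have := hwj j
      rw [hw] at this
      simp only [hv0, zero_mul, zero_sub, neg_eq_zero] at this
      exact (mul_eq_zero.mp this).resolve_left hu0
  -- so ξv = P *ᵥ v = 0, contradicting ξ' ≠ 0
  have : ξv = 0 := by rw [← hPv, hvzero, mulVec_zero]
  apply hξ'
  funext j
  have := congrFun this j.succ
  simpa [hξv] using this
end

section
/- (Ergosphere of the Gordon equation) Let c > 0, n_r > 1, and w ∈ ℝ³ with |w| < c; set v = (1 − |w|²/c²)^{−1/2} w/c ∈ ℝ³. Then the determinant of the 3×3 spatial Gordon matrix [−δ_{jk} + (n_r² − 1)v_j v_k]_{j,k=1,2,3} equals −(c² − n_r²|w|²)/(c² − |w|²). In particular this determinant vanishes if and only if |w|² = c²/n_r², so the ergosphere of the Gordon equation is S_Δ = {x : |w(x)|² = c²/n_r²}. -/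
set_option maxHeartbeats 1000000


/-- Ergosphere of the Gordon equation: for `c > 0`, `n_r > 1`, `|w| < c`, and
`v = (1 − |w|²/c²)^{-1/2} w / c`, the determinant of the spatial Gordon matrix
`[−δ_{jk} + (n_r² − 1) v_j v_k]_{j,k=1,2,3}` equals `−(c² − n_r²|w|²)/(c² − |w|²)`;
in particular it vanishes iff `|w|² = c²/n_r²`. -/
theorem gordon_ergosphere (c nr : ℝ) (hc : 0 < c) (hnr : 1 < nr)
    (w : Fin 3 → ℝ) (hw : ∑ j, w j ^ 2 < c ^ 2)
    (v : Fin 3 → ℝ)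
    (hv : v = fun j => (1 - (∑ i, w i ^ 2) / c ^ 2) ^ (-(1 : ℝ) / 2) * w j / c)
    (Δ : ℝ)
    (hΔ : Δ = Matrix.det (Matrix.of fun j k : Fin 3 =>
      -(if j = k then (1 : ℝ) else 0) + (nr ^ 2 - 1) * v j * v k)) :
    Δ = -(c ^ 2 - nr ^ 2 * ∑ j, w j ^ 2) / (c ^ 2 - ∑ j, w j ^ 2) ∧
      (Δ = 0 ↔ ∑ j, w j ^ 2 = c ^ 2 / nr ^ 2) := by
  set W := ∑ j, w j ^ 2 with hW
  have hcW : (0:ℝ) < c ^ 2 - W := by linarith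
  have hc2 : (c:ℝ) ^ 2 ≠ 0 := by positivity
  have hx : (0:ℝ) < 1 - W / c ^ 2 := by
    have : W / c ^ 2 < 1 := (div_lt_one (by positivity)).2 hw
    linarith
  set s : ℝ := (1 - W / c ^ 2) ^ (-(1 : ℝ) / 2) with hs
  have hs2 : s * s = (1 - W / c ^ 2)⁻¹ := by
    rw [hs, ← Real.rpow_add hx]
    norm_num [Real.rpow_neg_one]
  have hinv : (1 - W / c ^ 2)⁻¹ = c ^ 2 / (c ^ 2 - W) := by
    rw [eq_div_iff (ne_of_gt hcW)]
    field_simp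
  have hvv : ∀ j k, v j * v k = w j * w k / (c ^ 2 - W) := by
    intro j k
    rw [hv]
    simp only
    rw [div_mul_div_comm]
    rw [show s * (w j) * (s * (w k)) = (s * s) * (w j * w k) by ring,
      hs2, hinv]
    field_simp
  have hΔval : Δ = -(c ^ 2 - nr ^ 2 * W) / (c ^ 2 - W) := by
    have hM : (Matrix.of fun j k : Fin 3 =>
        -(if j = k then (1 : ℝ) else 0) + (nr ^ 2 - 1) * v j * v k) =
        Matrix.of fun j k : Fin 3 =>
        -(if j = k then (1 : ℝ) else 0) + (nr ^ 2 - 1) * (w j * w k / (c ^ 2 - W)) := by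
      ext j k
      simp only [Matrix.of_apply, mul_assoc, hvv]
    rw [hΔ, hM, Matrix.det_fin_three]
    norm_num [Matrix.of_apply, Fin.ext_iff]
    rw [hW, Fin.sum_univ_three]
    have h3 : c ^ 2 - (w 0 ^ 2 + w 1 ^ 2 + w 2 ^ 2) ≠ 0 := by
      rw [hW, Fin.sum_univ_three] at hcW; linarith
    field_simp
    ring
  refine ⟨hΔval, ?_⟩
  rw [hΔval]
  rw [div_eq_zero_iff]
  have hnr2 : (nr:ℝ) ^ 2 ≠ 0 := by positivity
  constructor
  · rintro (h | h)
    · rw [eq_div_iff hnr2]; linarith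
    · exact absurd h (ne_of_gt hcW)
  · intro h
    left
    rw [eq_div_iff hnr2] at h
    linarith
end
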